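/- With w(t) = A e^{iΩ₁t} + B e^{iΩ₂t} as above, the coefficient of e^{iΩ₁t} in |w|²w has modulus |A|·(|A|² + 2|B|²) when A|A|² and 2A|B|² are aligned; in particular, for the steady-state equation i(Ω₁−ω₀)X + (|X|² + 2|Y|²)X = F₁, the presence of a second tone (Y ≠ 0) strictly decreases the response amplitude |X| compared with the single-tone equation i(Ω₁−ω₀)X + |X|²X = F₁ (two-tone suppression), for fixed F₁ ≠ 0. -/

import Mathlib

/-!
Writing `A * ‖A‖² + 2 * A * ‖B‖² = A * (‖A‖² + 2‖B‖²)` with a nonnegative real factor gives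
the modulus. For the suppression, `G(r, s) = r² (δ² + (r² + 2s²)²)` is strictly increasing in
`r ≥ 0` and, for `r > 0`, strictly increasing in `s ≥ 0`. If the two-tone amplitude `r` were at
least the single-tone amplitude `r₀`, then `G(r₀, 0) ≤ G(r, 0) < G(r, s)`, although both sides
equal `|F₁|²`; and `F₁ ≠ 0` forces `r > 0`.
-/

open Set

theorem norm_mul_sq_norm_add_two_mul_sq_norm (A B : ℂ) :
    ‖A * (‖A‖ : ℂ) ^ 2 + 2 * A * (‖B‖ : ℂ) ^ 2‖ = ‖A‖ * (‖A‖ ^ 2 + 2 * ‖B‖ ^ 2) := by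
  have hfactor : A * (‖A‖ : ℂ) ^ 2 + 2 * A * (‖B‖ : ℂ) ^ 2
      = A * ((‖A‖ ^ 2 + 2 * ‖B‖ ^ 2 : ℝ) : ℂ) := by
    push_cast; ring
  rw [hfactor, norm_mul, Complex.norm_real, Real.norm_of_nonneg (by positivity)]

/-- `δ` is the detuning `Ω₁ - ω₀`, `r` and `s` the response amplitudes at `Ω₁` and `Ω₂`. -/
def twoToneResponse (δ r s : ℝ) : ℝ := r ^ 2 * (δ ^ 2 + (r ^ 2 + 2 * s ^ 2) ^ 2)

namespace twoToneResponse

variable (δ : ℝ)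

theorem zero_left (s : ℝ) : twoToneResponse δ 0 s = 0 := by
  simp [twoToneResponse]

theorem strictMonoOn_left (s : ℝ) : StrictMonoOn (twoToneResponse δ · s) (Ici 0) := by
  intro r hr r' _ hlt
  have hsq : r ^ 2 < r' ^ 2 := pow_lt_pow_left₀ hlt hr two_ne_zero
  have hinner : (r ^ 2 + 2 * s ^ 2) ^ 2 ≤ (r' ^ 2 + 2 * s ^ 2) ^ 2 :=
    pow_le_pow_left₀ (by positivity) (by linarith) 2
  have hr' : 0 < r' := lt_of_le_of_lt hr hlt
  exact mul_lt_mul_of_lt_of_le_of_nonneg_of_pos hsq (by linarith) (by positivity) (by positivity)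

theorem strictMonoOn_right {r : ℝ} (hr : r ≠ 0) : StrictMonoOn (twoToneResponse δ r) (Ici 0) := by
  intro s hs s' _ hlt
  have hsq : s ^ 2 < s' ^ 2 := pow_lt_pow_left₀ hlt hs two_ne_zero
  have hinner : (r ^ 2 + 2 * s ^ 2) ^ 2 < (r ^ 2 + 2 * s' ^ 2) ^ 2 :=
    pow_lt_pow_left₀ (by linarith) (by positivity) two_ne_zero
  exact mul_lt_mul_of_pos_left (by linarith) (by positivity)

/-- The amplitude solving `twoToneResponse δ r s = c` is strictly decreasing in `s`. -/
theorem lt_of_eq_of_right_lt {r r' s s' : ℝ} (hr : r ≠ 0) (hr' : 0 ≤ r') (hs : 0 ≤ s) (hss' : s < s')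
    (heq : twoToneResponse δ r s' = twoToneResponse δ r' s) : r < r' := by
  by_contra! hle
  have hr₀ : 0 ≤ r := hr'.trans hle
  have := calc
    twoToneResponse δ r' s ≤ twoToneResponse δ r s :=
      (strictMonoOn_left δ s).monotoneOn hr' hr₀ hle
    _ < twoToneResponse δ r s' := strictMonoOn_right δ hr hs (hs.trans hss'.le) hss'
  exact this.ne' heq

end twoToneResponse

/-- The coefficient of `e^{iΩ₁t}` in `|w|²w` has modulus `|A|(|A|² + 2|B|²)`; moreover, for
the two-tone steady state, the presence of a second tone (`s > 0`) strictly decreases the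
response amplitude at `Ω₁` compared with the single-tone response (two-tone suppression). -/
theorem stmt11 (ω₀ Ω₁ : ℝ) (F₁ : ℂ) (hF : F₁ ≠ 0) :
    (∀ A B : ℂ,
      ‖A * (‖A‖ : ℂ) ^ 2 + 2 * A * (‖B‖ : ℂ) ^ 2‖
        = ‖A‖ * ((‖A‖) ^ 2 + 2 * (‖B‖) ^ 2)) ∧
    (∀ s r rs : ℝ, 0 < s → 0 ≤ r → 0 ≤ rs →
      r ^ 2 * ((Ω₁ - ω₀) ^ 2 + (r ^ 2 + 2 * s ^ 2) ^ 2) = (‖F₁‖) ^ 2 →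
      rs ^ 2 * ((Ω₁ - ω₀) ^ 2 + rs ^ 4) = (‖F₁‖) ^ 2 →
      r < rs) := by
  refine ⟨norm_mul_sq_norm_add_two_mul_sq_norm, fun s r rs hs _ hrs htwo hone => ?_⟩
  have htwo : twoToneResponse (Ω₁ - ω₀) r s = ‖F₁‖ ^ 2 := htwo
  have hone : twoToneResponse (Ω₁ - ω₀) rs 0 = ‖F₁‖ ^ 2 := by
    rw [← hone, twoToneResponse]; ring
  have hr : r ≠ 0 := by
    rintro rfl
    rw [twoToneResponse.zero_left] at htwo
    exact pow_ne_zero 2 (norm_ne_zero_iff.mpr hF) htwo.symm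
  exact twoToneResponse.lt_of_eq_of_right_lt _ hr hrs le_rfl hs (htwo.trans hone.symm)
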